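/- If f_1, …, f_m ∈ ℂ[x] are pairwise coprime polynomials, not all constant, with f_1 + f_2 + ⋯ + f_m = 0, then max_{1≤i≤m} deg f_i ≤ (m−2)(deg rad(f_1 f_2 ⋯ f_m) − 1), where rad(p) denotes the product of the distinct irreducible factors of p. -/

import Mathlib

/-!
Write the relation as g₀ + g₁ + ⋯ + g_k = 0. If g₁, …, g_k are linearly independent, their
Wronskian W is nonzero: column operations bring them to pairwise distinct degrees, and then
the top coefficient of W is a nonzero Vandermonde-type determinant. A polynomial p divides
p⁽ʲ⁾ · rad(p)ʲ, and since g₀ = -(g₁ + ⋯ + g_k) the matrix of W can carry the derivatives of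
any one g_l in a column; so every g_l, hence (by coprimality) their product P, divides
W · rad(P)ᵏ⁻¹. With deg W ≤ ∑_{l ≥ 1} deg g_l - k(k-1)/2 this gives
deg g₀ + (k-1) ≤ (k-1) · deg rad(P).
If g₁, …, g_k are dependent, subtracting a multiple of ∑ g_l = 0 from a dependence relation
gives a vanishing combination with fewer terms that still involves g₀, and induction on the
number of terms concludes, since both factors of the bound can only grow.
-/

open Polynomial UniqueFactorizationMonoid Matrix Function

namespace Matrix

theorem det_descFactorial_ne_zero {R : Type*} [CommRing R] [IsDomain R] [CharZero R] {k : ℕ}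
    {d : Fin k → ℕ} (hd : Injective d) :
    (Matrix.of fun j t : Fin k => ((d t).descFactorial j : R)).det ≠ 0 := by
  have hV : (Matrix.of fun j t : Fin k => ((d t).descFactorial j : R)) =
      (Matrix.of fun t j : Fin k => (descPochhammer R j).eval (d t : R))ᵀ := by
    ext j t
    simp [descPochhammer_eval_eq_descFactorial]
  rw [hV, det_transpose, ← det_eval_matrixOfPolynomials_eq_det_vandermonde _ _
    (fun j => descPochhammer_natDegree R j) (fun j => monic_descPochhammer R j)]
  exact det_vandermonde_ne_zero_iff.mpr (Nat.cast_injective.comp hd)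

end Matrix

theorem exists_sum_smul_eq_zero_of_not_linearIndependent {R M ι : Type*} [Ring R]
    [AddCommGroup M] [Module R M] [Fintype ι] [DecidableEq ι] {g : ι → M}
    (hsum : ∑ l, g l = 0) {i : ι} (hli : ¬LinearIndependent R fun l : {l // l ≠ i} => g l) :
    ∃ c : ι → R, ∑ l, c l • g l = 0 ∧ c i ≠ 0 ∧ ∃ j, c j = 0 := by
  obtain ⟨a, ha, j, hj⟩ := Fintype.not_linearIndependent_iff.mp hli
  refine ⟨fun l => (if h : l = i then 0 else a ⟨l, h⟩) - a j, ?_, by simpa using hj, j,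
    by simp [j.2]⟩
  simp only [sub_smul, Finset.sum_sub_distrib, ← Finset.smul_sum, hsum, smul_zero, sub_zero]
  rw [Fintype.sum_eq_add_sum_subtype_ne _ i, dif_pos rfl, zero_smul, zero_add, ← ha]
  exact Finset.sum_congr rfl fun l _ => by rw [dif_neg l.2]

namespace Polynomial

theorem coeff_prod_sum_of_natDegree_le {R ι : Type*} [CommSemiring R] (s : Finset ι)
    (f : ι → R[X]) (n : ι → ℕ) (h : ∀ i ∈ s, (f i).natDegree ≤ n i) :
    (∏ i ∈ s, f i).coeff (∑ i ∈ s, n i) = ∏ i ∈ s, (f i).coeff (n i) := by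
  classical
  induction s using Finset.induction_on with
  | empty => simp
  | insert a s ha ih =>
    rw [Finset.forall_mem_insert] at h
    rw [Finset.prod_insert ha, Finset.sum_insert ha, Finset.prod_insert ha,
      coeff_mul_add_eq_of_natDegree_le h.1
        ((natDegree_prod_le s f).trans (Finset.sum_le_sum h.2)), ih h.2]

theorem natDegree_iterate_derivative_add_le {R : Type*} [Semiring R] {p : R[X]} {n : ℕ}
    (h : derivative^[n] p ≠ 0) : (derivative^[n] p).natDegree + n ≤ p.natDegree := by
  have hn : n ≤ p.natDegree := by
    by_contra! hlt
    exact h (iterate_derivative_eq_zero hlt)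
  have := natDegree_iterate_derivative p n
  omega

section Wronskian

variable {R : Type*} [CommRing R] {k : ℕ}

noncomputable def wronskianMatrix (g : Fin k → R[X]) : Matrix (Fin k) (Fin k) R[X] :=
  Matrix.of fun j t => derivative^[j] (g t)

theorem wronskianMatrix_update (g : Fin k → R[X]) (t : Fin k) (p : R[X]) :
    wronskianMatrix (Function.update g t p) =
      (wronskianMatrix g).updateCol t fun j => derivative^[j] p := by
  ext j s
  by_cases h : s = t <;> simp [wronskianMatrix, h]

theorem det_wronskianMatrix_update_sum_smul (g : Fin k → R[X]) (t : Fin k) (c : Fin k → R) :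
    (wronskianMatrix (Function.update g t (∑ s, c s • g s))).det =
      C (c t) * (wronskianMatrix g).det := by
  have hcol : (fun j : Fin k => derivative^[j] (∑ s, c s • g s)) =
      fun j => ∑ s, C (c s) • wronskianMatrix g j s := by
    ext1 j
    simp [wronskianMatrix, iterate_derivative_sum, smul_eq_C_mul]
  rw [wronskianMatrix_update, hcol, det_updateCol_sum, smul_eq_mul]

theorem det_wronskianMatrix_update_add_smul (g : Fin k → R[X]) {s t : Fin k} (hst : s ≠ t)
    (c : R) :
    (wronskianMatrix (Function.update g s (g s + c • g t))).det = (wronskianMatrix g).det := by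
  classical
  have h := det_wronskianMatrix_update_sum_smul g s (Pi.single s 1 + Pi.single t c)
  simp only [Pi.add_apply, add_smul, Finset.sum_add_distrib, Pi.single_apply, ite_smul,
    one_smul, zero_smul, Finset.sum_ite_eq', Finset.mem_univ, if_true, if_neg hst, add_zero,
    map_one, one_mul] at h
  exact h

theorem natDegree_det_wronskianMatrix_add_le [IsDomain R] {g : Fin k → R[X]}
    (hW : (wronskianMatrix g).det ≠ 0) :
    (wronskianMatrix g).det.natDegree + ∑ j : Fin k, (j : ℕ) ≤ ∑ t, (g t).natDegree := by
  classical
  have hterm : ∀ σ : Equiv.Perm (Fin k), ∏ t, wronskianMatrix g (σ t) t ≠ 0 →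
      (∏ t, wronskianMatrix g (σ t) t).natDegree + ∑ j : Fin k, (j : ℕ) ≤
        ∑ t, (g t).natDegree := by
    intro σ hσ
    rw [natDegree_prod _ _ fun t _ => (Finset.prod_ne_zero_iff.mp hσ) t (Finset.mem_univ t),
      ← Equiv.sum_comp σ fun j : Fin k => (j : ℕ), ← Finset.sum_add_distrib]
    exact Finset.sum_le_sum fun t _ => natDegree_iterate_derivative_add_le
      ((Finset.prod_ne_zero_iff.mp hσ) t (Finset.mem_univ t))
  rw [det_apply] at hW
  obtain ⟨σ₀, -, hσ₀⟩ := Finset.exists_ne_zero_of_sum_ne_zero hW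
  have h₀ := hterm σ₀ fun h => hσ₀ (by rw [h, smul_zero])
  suffices (wronskianMatrix g).det.natDegree ≤
      ∑ t, (g t).natDegree - ∑ j : Fin k, (j : ℕ) by omega
  rw [det_apply]
  refine natDegree_sum_le_of_forall_le _ _ fun σ _ => ?_
  rw [natDegree_smul_of_smul_regular _ (isSMulRegular_of_group _)]
  by_cases hσ : ∏ t, wronskianMatrix g (σ t) t = 0
  · simp [hσ]
  · have := hterm σ hσ
    omega

theorem coeff_det_wronskianMatrix (g : Fin k → R[X]) :
    (wronskianMatrix g).det.coeff (∑ t, (g t).natDegree - ∑ j : Fin k, (j : ℕ)) =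
      (Matrix.of fun j t : Fin k =>
        ((g t).natDegree.descFactorial j : R) * (g t).leadingCoeff).det := by
  rw [det_apply, det_apply, finsetSum_coeff]
  refine Finset.sum_congr rfl fun σ _ => ?_
  rw [coeff_smul]
  congr 1
  by_cases hσ : ∀ t, (σ t : ℕ) ≤ (g t).natDegree
  · have hdeg : ∑ t, (g t).natDegree - ∑ j : Fin k, (j : ℕ) =
        ∑ t, ((g t).natDegree - σ t) := by
      have h : ∑ t, ((g t).natDegree - σ t) + ∑ t, (σ t : ℕ) = ∑ t, (g t).natDegree := by
        rw [← Finset.sum_add_distrib]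
        exact Finset.sum_congr rfl fun t _ => Nat.sub_add_cancel (hσ t)
      rw [← Equiv.sum_comp σ fun j : Fin k => (j : ℕ)]
      omega
    simp only [wronskianMatrix, of_apply]
    rw [hdeg, coeff_prod_sum_of_natDegree_le _ _ _ fun t _ => natDegree_iterate_derivative _ _]
    refine Finset.prod_congr rfl fun t _ => ?_
    simp [coeff_iterate_derivative, Nat.sub_add_cancel (hσ t)]
  · obtain ⟨t, ht⟩ := not_forall.mp hσ
    rw [not_le] at ht
    rw [Finset.prod_eq_zero (Finset.mem_univ t) (iterate_derivative_eq_zero ht),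
      Finset.prod_eq_zero (Finset.mem_univ t)
        (by simp [Nat.descFactorial_eq_zero_iff_lt.mpr ht]), coeff_zero]

theorem det_wronskianMatrix_ne_zero_of_injective [IsDomain R] [CharZero R] {g : Fin k → R[X]}
    (hg : ∀ t, g t ≠ 0) (hd : Injective fun t => (g t).natDegree) :
    (wronskianMatrix g).det ≠ 0 := by
  have hB : (Matrix.of fun j t : Fin k =>
        ((g t).natDegree.descFactorial j : R) * (g t).leadingCoeff) =
      (Matrix.of fun j t : Fin k => ((g t).natDegree.descFactorial j : R)) *
        diagonal fun t => (g t).leadingCoeff := by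
    ext j t
    simp [mul_diagonal]
  intro hW
  have hcoeff := coeff_det_wronskianMatrix g
  rw [hW, coeff_zero, hB, det_mul, det_diagonal, eq_comm, mul_eq_zero] at hcoeff
  rcases hcoeff with h | h
  · exact det_descFactorial_ne_zero hd h
  · exact Finset.prod_ne_zero_iff.mpr (fun t _ => leadingCoeff_ne_zero.mpr (hg t)) h

end Wronskian

variable {K : Type*} [Field K]

theorem det_wronskianMatrix_ne_zero [CharZero K] {k : ℕ} {g : Fin k → K[X]}
    (hli : LinearIndependent K g) : (wronskianMatrix g).det ≠ 0 := by
  induction hN : ∑ t, (g t).natDegree using Nat.strong_induction_on generalizing g with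
  | _ N ih =>
  by_cases hinj : Injective fun t => (g t).natDegree
  · exact det_wronskianMatrix_ne_zero_of_injective hli.ne_zero hinj
  obtain ⟨s, t, hdeg, hst⟩ := not_injective_iff.mp hinj
  classical
  have hs := leadingCoeff_ne_zero.mpr (hli.ne_zero s)
  have ht := leadingCoeff_ne_zero.mpr (hli.ne_zero t)
  set a := (g s).leadingCoeff / (g t).leadingCoeff
  set g' := Function.update g s (g s - C a * g t)
  have hdet : (wronskianMatrix g').det = (wronskianMatrix g).det := by
    simpa [g', sub_eq_add_neg, smul_eq_C_mul] using
      det_wronskianMatrix_update_add_smul g hst (-a)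
  have hli' : LinearIndependent K g' := by
    refine hli.update s _ ⟨1, one_mem _, Finsupp.single s 1 + Finsupp.single t (-a), ?_, ?_⟩
    · simp [hst.symm]
    · simp [Finsupp.linearCombination_single, sub_eq_add_neg, smul_eq_C_mul]
  have hlt : (g' s).natDegree < (g s).natDegree := by
    refine natDegree_lt_natDegree (hli'.ne_zero s) ?_
    simp only [g', update_self]
    refine degree_sub_lt_left ?_ (hli.ne_zero s) ?_
    · rw [degree_C_mul (div_ne_zero hs ht), degree_eq_natDegree (hli.ne_zero s),
        degree_eq_natDegree (hli.ne_zero t), hdeg]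
    · rw [leadingCoeff_mul, leadingCoeff_C, div_mul_cancel₀ _ ht]
  rw [← hdet]
  refine ih _ ?_ hli' rfl
  rw [← hN]
  refine Finset.sum_lt_sum (fun u _ => ?_) ⟨s, Finset.mem_univ s, hlt⟩
  by_cases hu : u = s
  · exact hu ▸ hlt.le
  · simp [g', hu]

section Radical

variable [DecidableEq K]

theorem dvd_derivative_mul_radical {p a : K[X]} (h : p ∣ a) : p ∣ derivative a * radical p := by
  obtain ⟨b, rfl⟩ := h
  have hp : p ∣ derivative p * radical p :=
    calc p = EuclideanDomain.divRadical p * radical p :=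
          EuclideanDomain.divRadical_mul_radical.symm
      _ ∣ derivative p * radical p := mul_dvd_mul_right (divRadical_dvd_derivative p) _
  rw [derivative_mul, add_mul, mul_right_comm, mul_assoc p]
  exact dvd_add (dvd_mul_of_dvd_left hp _) (dvd_mul_right _ _)

theorem dvd_iterate_derivative_mul_radical_pow (p : K[X]) (n : ℕ) :
    p ∣ derivative^[n] p * radical p ^ n := by
  induction n with
  | zero => simp
  | succ n ih =>
    set r := radical p
    have h := dvd_derivative_mul_radical ih
    have e : derivative (derivative^[n] p * r ^ n) * r = derivative^[n + 1] p * r ^ (n + 1) +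
        C (n : K) * derivative r * (derivative^[n] p * r ^ n) := by
      rw [iterate_succ_apply', derivative_mul, derivative_pow]
      rcases n with _ | n
      · simp
      · rw [Nat.add_sub_cancel]
        ring
    rw [e] at h
    exact (dvd_add_left (dvd_mul_of_dvd_right ih _)).mp h

theorem dvd_det_mul_radical_pow {k : ℕ} (M : Matrix (Fin k) (Fin k) K[X]) (t : Fin k)
    {p : K[X]} (hcol : ∀ j, M j t = derivative^[j] p) : p ∣ M.det * radical p ^ (k - 1) := by
  rw [det_apply, Finset.sum_mul]
  refine Finset.dvd_sum fun σ _ => ?_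
  have hσ : p ∣ M (σ t) t * radical p ^ (k - 1) := by
    rw [hcol]
    exact (dvd_iterate_derivative_mul_radical_pow p _).trans
      (mul_dvd_mul_left _ (pow_dvd_pow _ (by omega)))
  rw [Units.smul_def, zsmul_eq_mul, mul_assoc]
  exact dvd_mul_of_dvd_right (hσ.trans (mul_dvd_mul_right
    (Finset.dvd_prod_of_mem (fun i => M (σ i) i) (Finset.mem_univ t)) _)) _

end Radical

section Mason

variable [CharZero K] [DecidableEq K] {ι : Type*} [Fintype ι]

theorem natDegree_add_le_mul_natDegree_radical_of_linearIndependent [DecidableEq ι]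
    {g : ι → K[X]} (hg : ∀ l, g l ≠ 0) (hcop : Pairwise (IsCoprime on g))
    (hsum : ∑ l, g l = 0) {i : ι} (hli : LinearIndependent K fun l : {l // l ≠ i} => g l) :
    (g i).natDegree + (Fintype.card ι - 2) ≤
      (Fintype.card ι - 2) * (radical (∏ l, g l)).natDegree := by
  set k := Fintype.card {l // l ≠ i}
  have hk : Fintype.card ι - 2 = k - 1 := by
    simp only [k, Fintype.card_subtype_compl, Fintype.card_unique]
    omega
  let e := Fintype.equivFin {l // l ≠ i}
  set v : Fin k → K[X] := fun t => g (e.symm t)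
  have hgi : g i = ∑ t, (-1 : K) • v t := by
    rw [Fintype.sum_eq_add_sum_subtype_ne _ i, ← e.symm.sum_comp] at hsum
    simp only [neg_one_smul, Finset.sum_neg_distrib]
    exact eq_neg_of_add_eq_zero_left hsum
  set W := (wronskianMatrix v).det
  have hW : W ≠ 0 := det_wronskianMatrix_ne_zero (hli.comp _ e.symm.injective)
  have hP : ∏ l, g l ≠ 0 := Finset.prod_ne_zero_iff.mpr fun l _ => hg l
  set r := radical (∏ l, g l)
  have hdvd : ∀ l, g l ∣ W * r ^ (k - 1) := by
    intro l
    have hrad : radical (g l) ∣ r :=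
      radical_dvd_radical (Finset.dvd_prod_of_mem g (Finset.mem_univ l)) hP
    refine (?_ : g l ∣ W * radical (g l) ^ (k - 1)).trans
      (mul_dvd_mul_left _ (pow_dvd_pow_of_dvd hrad _))
    by_cases hl : l = i
    · subst hl
      have hk0 : 0 < k := Nat.pos_of_ne_zero fun hk0 => hg l (by
        rw [hgi]; exact Finset.sum_eq_zero fun t _ => absurd t.2 (by omega))
      set t₀ : Fin k := ⟨0, hk0⟩
      have hdet := dvd_det_mul_radical_pow
        (wronskianMatrix (Function.update v t₀ (∑ t, (-1 : K) • v t))) t₀ (p := g l)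
        fun j => by simp [wronskianMatrix, hgi]
      rw [det_wronskianMatrix_update_sum_smul] at hdet
      simpa using hdet
    · simpa [v] using dvd_det_mul_radical_pow (wronskianMatrix v) (e ⟨l, hl⟩) fun j => rfl
  have hWr : W * r ^ (k - 1) ≠ 0 := mul_ne_zero hW (pow_ne_zero _ radical_ne_zero)
  have hdeg := natDegree_le_of_dvd
    (Finset.prod_dvd_of_coprime (t := Finset.univ) (hcop.set_pairwise _) fun l _ => hdvd l) hWr
  rw [natDegree_prod _ _ fun l _ => hg l, natDegree_mul hW (pow_ne_zero _ radical_ne_zero),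
    natDegree_pow, Fintype.sum_eq_add_sum_subtype_ne _ i, ← e.symm.sum_comp] at hdeg
  have hWdeg := natDegree_det_wronskianMatrix_add_le hW
  have hj : k - 1 ≤ ∑ j : Fin k, (j : ℕ) := by
    rcases Nat.eq_zero_or_pos k with hk0 | hk0
    · omega
    · exact Finset.single_le_sum (f := fun j : Fin k => (j : ℕ)) (fun _ _ => Nat.zero_le _)
        (Finset.mem_univ ⟨k - 1, by omega⟩)
  rw [hk]
  linarith

theorem natDegree_le_mul_natDegree_radical_sub_one {g : ι → K[X]} (hg : ∀ l, g l ≠ 0)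
    (hcop : Pairwise (IsCoprime on g)) (hsum : ∑ l, g l = 0) (i : ι) :
    (g i).natDegree ≤ (Fintype.card ι - 2) * ((radical (∏ l, g l)).natDegree - 1) := by
  classical
  induction hn : Fintype.card ι using Nat.strong_induction_on generalizing ι with
  | _ n ih =>
  by_cases hli : LinearIndependent K fun l : {l // l ≠ i} => g l
  · have := natDegree_add_le_mul_natDegree_radical_of_linearIndependent hg hcop hsum hli
    rw [hn] at this
    rw [Nat.mul_sub_one]
    omega
  obtain ⟨c, hc, hci, j, hcj⟩ := exists_sum_smul_eq_zero_of_not_linearIndependent hsum hli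
  have hcard : Fintype.card {l // c l ≠ 0} < n := hn ▸ Fintype.card_subtype_lt (not_not.mpr hcj)
  have hsumS : ∑ l : {l // c l ≠ 0}, c l • g l = 0 := by
    rw [← hc, ← Fintype.sum_subtype_add_sum_subtype (fun l => c l ≠ 0), left_eq_add]
    exact Finset.sum_eq_zero fun l _ => by simp [not_not.mp l.2]
  have hcopS : Pairwise (IsCoprime on fun l : {l // c l ≠ 0} => c l • g l) := by
    intro a b hab
    simp only [onFun, smul_eq_C_mul]
    rw [isCoprime_mul_units_left (isUnit_C.mpr a.2.isUnit) (isUnit_C.mpr b.2.isUnit)]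
    exact hcop (Subtype.coe_injective.ne hab)
  have hS := ih _ hcard (ι := {l // c l ≠ 0}) (fun l => smul_ne_zero l.2 (hg l)) hcopS hsumS
    ⟨i, hci⟩ rfl
  rw [natDegree_smul _ hci, Finset.prod_smul, smul_eq_C_mul, radical_mul_of_isUnit_left
    (isUnit_C.mpr (Finset.prod_ne_zero_iff.mpr fun l _ => l.2).isUnit)] at hS
  refine hS.trans (Nat.mul_le_mul (by omega) (Nat.sub_le_sub_right ?_ 1))
  refine natDegree_le_of_dvd (radical_dvd_radical ?_ ?_) radical_ne_zero
  · exact Dvd.intro _ (Fintype.prod_subtype_mul_prod_subtype (fun l => c l ≠ 0) g)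
  · exact Finset.prod_ne_zero_iff.mpr fun l _ => hg l

end Mason

end Polynomial

open Polynomial

theorem shapiro_sparer (m : ℕ) (f : Fin m → ℂ[X])
    (hcop : ∀ i j : Fin m, i ≠ j → IsCoprime (f i) (f j))
    (hconst : ¬ ∀ i, (f i).natDegree = 0)
    (hsum : ∑ i, f i = 0) :
    ∀ i, ((f i).natDegree : ℤ) ≤
      ((m : ℤ) - 2) *
        (((UniqueFactorizationMonoid.radical (∏ i, f i)).natDegree : ℤ) - 1) := by
  have hf : ∀ i, f i ≠ 0 := by
    intro i hi
    refine hconst fun j => ?_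
    by_cases hji : j = i
    · rw [hji, hi, natDegree_zero]
    · exact natDegree_eq_zero_of_isUnit (isCoprime_zero_right.mp (hi ▸ hcop j i hji))
  have hbound := natDegree_le_mul_natDegree_radical_sub_one hf (fun a b => hcop a b) hsum
  rw [Fintype.card_fin] at hbound
  obtain ⟨j, hj⟩ := not_forall.mp hconst
  -- the bound at a nonconstant `f j` forces both truncated factors to be positive
  obtain ⟨hm, hR⟩ :=
    CanonicallyOrderedAdd.mul_pos.mp ((Nat.pos_of_ne_zero hj).trans_le (hbound j))
  intro i
  have hi := hbound i
  zify [(by omega : 2 ≤ m), (by omega : 1 ≤ (radical (∏ i, f i)).natDegree)] at hi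
  exact hi
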